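/- Let s, z : (0,∞) → ℝ with s continuous and z twice differentiable, satisfying z'' + z'/r − z/r² − z s² = 0 on (0,∞). Let g(r) := z'(r) + z(r)/r, and assume: g(r) → 2 z₀ as r → 0⁺ for some real z₀; g(r) → 0 as r → ∞; and r ↦ z(r) s(r)² is integrable on (0,∞). Then z₀ = −(1/2) ∫₀^∞ z(r) s(r)² dr. If moreover z(r) > 0 for all r > 0 and s(r₀) ≠ 0 for some r₀ > 0, then z₀ < 0. -/
import Mathlib


open Set Filter MeasureTheory Topology Real

/-- Lemma 2 of the paper: integrating `g' = z s²` where `g = z' + z/r = (1/r)(rz)'`,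
one gets `z₀ = −(1/2)∫₀^∞ z s² dr`; if moreover `z > 0` and `s` is not identically zero,
then `z₀ < 0`. -/
theorem statement2 (s z z' z'' : ℝ → ℝ) (z₀ : ℝ)
    (hs : ContinuousOn s (Set.Ioi (0:ℝ)))
    (hz' : ∀ r ∈ Set.Ioi (0:ℝ), HasDerivAt z (z' r) r)
    (hz'' : ∀ r ∈ Set.Ioi (0:ℝ), HasDerivAt z' (z'' r) r)
    (heq : ∀ r ∈ Set.Ioi (0:ℝ),
      z'' r + z' r / r - z r / r ^ 2 - z r * s r ^ 2 = 0)
    (hg0 : Filter.Tendsto (fun r => z' r + z r / r) (nhdsWithin 0 (Set.Ioi 0))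
      (nhds (2 * z₀)))
    (hginf : Filter.Tendsto (fun r => z' r + z r / r) Filter.atTop (nhds 0))
    (hint : MeasureTheory.IntegrableOn (fun r => z r * s r ^ 2) (Set.Ioi 0)) :
    z₀ = -(1/2) * ∫ r in Set.Ioi (0:ℝ), z r * s r ^ 2 ∧
      ((∀ r : ℝ, 0 < r → 0 < z r) → (∃ r₀ : ℝ, 0 < r₀ ∧ s r₀ ≠ 0) → z₀ < 0) := by
  set G : ℝ → ℝ := fun r => if r ≤ 0 then 2 * z₀ else z' r + z r / r with hG
  have hGeq : ∀ r ∈ Set.Ioi (0:ℝ), G r = z' r + z r / r := by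
    intro r hr
    simp [hG, not_le.mpr (Set.mem_Ioi.mp hr)]
  have hGderiv : ∀ x ∈ Set.Ioi (0:ℝ), HasDerivAt G (z x * s x ^ 2) x := by
    intro x hx
    have hx0 : (0:ℝ) < x := hx
    have h1 : HasDerivAt (fun r => z' r + z r / r)
        (z'' x + (z' x * x - z x * 1) / x ^ 2) x := by
      exact (hz'' x hx).add ((hz' x hx).div (hasDerivAt_id x) (ne_of_gt hx0))
    have h2 : z'' x + (z' x * x - z x * 1) / x ^ 2 = z x * s x ^ 2 := by
      have h3 := heq x hx
      have hx2 : x ^ 2 ≠ 0 := pow_ne_zero 2 (ne_of_gt hx0)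
      field_simp at h3 ⊢
      nlinarith [h3]
    rw [h2] at h1
    apply h1.congr_of_eventuallyEq
    filter_upwards [Ioi_mem_nhds hx0] with y hy
    exact hGeq y hy
  have hGcont : ContinuousWithinAt G (Set.Ici (0:ℝ)) 0 := by
    rw [← continuousWithinAt_Ioi_iff_Ici]
    have hG0 : G 0 = 2 * z₀ := by simp [hG]
    rw [ContinuousWithinAt, hG0]
    apply hg0.congr'
    filter_upwards [self_mem_nhdsWithin] with y hy
    exact (hGeq y hy).symm
  have hGinf : Filter.Tendsto G Filter.atTop (nhds 0) := by
    apply hginf.congr'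
    filter_upwards [Ioi_mem_atTop (0:ℝ)] with y hy
    exact (hGeq y hy).symm
  have hkey : ∫ r in Set.Ioi (0:ℝ), z r * s r ^ 2 = 0 - G 0 :=
    MeasureTheory.integral_Ioi_of_hasDerivAt_of_tendsto hGcont hGderiv hint hGinf
  have hG0 : G 0 = 2 * z₀ := by simp [hG]
  rw [hG0] at hkey
  have hzeq : z₀ = -(1/2) * ∫ r in Set.Ioi (0:ℝ), z r * s r ^ 2 := by
    rw [hkey]; ring
  refine ⟨hzeq, fun hzpos ⟨r₀, hr₀, hs₀⟩ => ?_⟩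
  rw [hzeq]
  have hintpos : 0 < ∫ r in Set.Ioi (0:ℝ), z r * s r ^ 2 := by
    rw [MeasureTheory.setIntegral_pos_iff_support_of_nonneg_ae]
    · -- positive measure of support ∩ Ioi 0
      have hcont : ContinuousAt (fun r => z r * s r ^ 2) r₀ := by
        have hzc : ContinuousAt z r₀ := (hz' r₀ hr₀).continuousAt
        have hsc : ContinuousAt s r₀ :=
          hs.continuousAt (Ioi_mem_nhds hr₀)
        exact hzc.mul (hsc.pow 2)
      have hfpos : 0 < z r₀ * s r₀ ^ 2 :=
        mul_pos (hzpos r₀ hr₀) (by positivity)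
      have hev : ∀ᶠ x in nhds r₀, x ∈ Function.support (fun r => z r * s r ^ 2) ∩ Set.Ioi 0 := by
        have h1 : ∀ᶠ x in nhds r₀, 0 < z x * s x ^ 2 :=
          hcont.eventually (eventually_gt_nhds hfpos)
        have h2 : ∀ᶠ x in nhds r₀, x ∈ Set.Ioi (0:ℝ) :=
          Ioi_mem_nhds hr₀
        filter_upwards [h1, h2] with x hx1 hx2
        exact ⟨ne_of_gt hx1, hx2⟩
      obtain ⟨t, htsub, htopen, htmem⟩ := eventually_nhds_iff.mp hev
      calc (0:ENNReal) < MeasureTheory.volume t := htopen.measure_pos _ ⟨r₀, htmem⟩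
        _ ≤ _ := measure_mono fun x hx => htsub x hx
    · filter_upwards [MeasureTheory.ae_restrict_mem measurableSet_Ioi] with x hx
      exact mul_nonneg (le_of_lt (hzpos x hx)) (sq_nonneg _)
    · exact hint
  nlinarith [hintpos]
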